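/- arXiv:1711.01358 — 2 statements merged into one kernel-verified Lean document; each statement's English description precedes it below -/
import Mathlib

section
/- Let φ be a reduced Boolean formula defining a set S ⊆ {0,1}^n and let Q ⊆ [0,1]^n be a convex set containing S. Then φ(Q) ∩ ℤ^n = S; in particular, no point of {0,1}^n \ S belongs to φ(Q). -/
/-- Reduced Boolean formulas: literals combined with `∧` and `∨`. -/
inductive Fml (n : ℕ) : Type
  | pos : Fin n → Fml n
  | neg : Fin n → Fml n
  | and : Fml n → Fml n → Fml n
  | or  : Fml n → Fml n → Fml n

namespace Fml

/-- Evaluation of a reduced formula on a (0/1-valued) real point. -/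
def eval {n : ℕ} : Fml n → (Fin n → ℝ) → Prop
  | pos i, x => x i = 1
  | neg i, x => x i = 0
  | and φ ψ, x => φ.eval x ∧ ψ.eval x
  | or φ ψ, x => φ.eval x ∨ ψ.eval x

/-- The set `φ(Q)` obtained by feeding the convex set `Q` into the formula `φ`. -/
def app {n : ℕ} : Fml n → Set (Fin n → ℝ) → Set (Fin n → ℝ)
  | pos i, Q => {x ∈ Q | x i = 1}
  | neg i, Q => {x ∈ Q | x i = 0}
  | and φ ψ, Q => φ.app Q ∩ ψ.app Q
  | or φ ψ, Q => convexHull ℝ (φ.app Q ∪ ψ.app Q)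

end Fml

/-- The 0/1 points of the cube. -/
def CubeVerts (n : ℕ) : Set (Fin n → ℝ) := {x | ∀ i, x i = 0 ∨ x i = 1}

/-- The integer points of `ℝ^n` (the set `ℤ^n`). -/
def IntPoints (n : ℕ) : Set (Fin n → ℝ) := {x | ∀ i, ∃ z : ℤ, x i = (z : ℝ)}

lemma app_subset {n : ℕ} (φ : Fml n) {Q : Set (Fin n → ℝ)} (hQ : Convex ℝ Q) :
    φ.app Q ⊆ Q := by
  induction φ with
  | pos i => exact fun x hx => hx.1
  | neg i => exact fun x hx => hx.1
  | and φ ψ ihφ ihψ => exact fun x hx => ihφ hx.1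
  | or φ ψ ihφ ihψ => exact convexHull_min (Set.union_subset ihφ ihψ) hQ

/-- A 0/1 vertex lying in the convex hull of a subset of the cube lies in that subset. -/
lemma vertex_mem_of_mem_convexHull {n : ℕ} {x : Fin n → ℝ} (hx : x ∈ CubeVerts n)
    {T : Set (Fin n → ℝ)} (hT : T ⊆ Set.Icc 0 1) (h : x ∈ convexHull ℝ T) : x ∈ T := by
  rw [convexHull_eq] at h
  obtain ⟨ι, t, w, z, hw0, hw1, hz, hx'⟩ := h
  rw [Finset.centerMass_eq_of_sum_1 _ _ hw1] at hx'
  have key : ∀ i ∈ t, w i ≠ 0 → z i = x := by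
    intro i hi hwi
    funext k
    have hxk : x k = ∑ j ∈ t, w j * z j k := by
      rw [← hx']; simp [Finset.sum_apply]
    have hz01 : ∀ j ∈ t, 0 ≤ z j k ∧ z j k ≤ 1 := fun j hj =>
      ⟨(hT (hz j hj)).1 k, (hT (hz j hj)).2 k⟩
    rcases hx k with h0 | h1
    · have hnn : ∀ j ∈ t, 0 ≤ w j * z j k := fun j hj =>
        mul_nonneg (hw0 j hj) (hz01 j hj).1
      have hsum0 : ∑ j ∈ t, w j * z j k = 0 := by rw [← hxk, h0]
      have hi0 := (Finset.sum_eq_zero_iff_of_nonneg hnn).mp hsum0 i hi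
      rcases mul_eq_zero.mp hi0 with h | h
      · exact absurd h hwi
      · rw [h, h0]
    · have hsum0 : ∑ j ∈ t, w j * (1 - z j k) = 0 := by
        have : ∑ j ∈ t, w j * (1 - z j k)
            = (∑ j ∈ t, w j) - ∑ j ∈ t, w j * z j k := by
          rw [← Finset.sum_sub_distrib]
          apply Finset.sum_congr rfl
          intro j hj; ring
        rw [this, hw1, ← hxk, h1, sub_self]
      have hnn : ∀ j ∈ t, 0 ≤ w j * (1 - z j k) := fun j hj =>
        mul_nonneg (hw0 j hj) (by linarith [(hz01 j hj).2])
      have hi0 := (Finset.sum_eq_zero_iff_of_nonneg hnn).mp hsum0 i hi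
      rcases mul_eq_zero.mp hi0 with h | h
      · exact absurd h hwi
      · rw [h1]; linarith
  obtain ⟨i, hi, hwi⟩ : ∃ i ∈ t, w i ≠ 0 := by
    by_contra hc
    push_neg at hc
    have : (∑ j ∈ t, w j) = 0 := Finset.sum_eq_zero hc
    rw [hw1] at this; norm_num at this
  rw [← key i hi hwi]
  exact hz i hi

/-- Soundness: on 0/1 vertices, membership in `φ(Q)` implies satisfaction of `φ`. -/
lemma eval_of_mem_app {n : ℕ} (φ : Fml n) {Q : Set (Fin n → ℝ)} (hQconv : Convex ℝ Q)
    (hQcube : Q ⊆ Set.Icc (0 : Fin n → ℝ) 1) {x : Fin n → ℝ} (hx : x ∈ CubeVerts n)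
    (h : x ∈ φ.app Q) : φ.eval x := by
  induction φ with
  | pos i => exact h.2
  | neg i => exact h.2
  | and φ ψ ihφ ihψ => exact ⟨ihφ h.1, ihψ h.2⟩
  | or φ ψ ihφ ihψ =>
    have hsub : φ.app Q ∪ ψ.app Q ⊆ Set.Icc 0 1 :=
      Set.union_subset ((app_subset φ hQconv).trans hQcube)
        ((app_subset ψ hQconv).trans hQcube)
    rcases vertex_mem_of_mem_convexHull hx hsub h with h | h
    · exact Or.inl (ihφ h)
    · exact Or.inr (ihψ h)

/-- Completeness: a point of `Q` satisfying `φ` lies in `φ(Q)`. -/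
lemma mem_app_of_eval {n : ℕ} (φ : Fml n) {Q : Set (Fin n → ℝ)} {x : Fin n → ℝ}
    (hxQ : x ∈ Q) (h : φ.eval x) : x ∈ φ.app Q := by
  induction φ with
  | pos i => exact ⟨hxQ, h⟩
  | neg i => exact ⟨hxQ, h⟩
  | and φ ψ ihφ ihψ => exact ⟨ihφ h.1, ihψ h.2⟩
  | or φ ψ ihφ ihψ =>
    rcases h with h | h
    · exact subset_convexHull ℝ _ (Or.inl (ihφ h))
    · exact subset_convexHull ℝ _ (Or.inr (ihψ h))

theorem stmt7 {n : ℕ} (φ : Fml n) (S Q : Set (Fin n → ℝ))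
    (hS : S = {x ∈ CubeVerts n | φ.eval x})
    (hQconv : Convex ℝ Q) (hQcube : Q ⊆ Set.Icc (0 : Fin n → ℝ) 1) (hSQ : S ⊆ Q) :
    φ.app Q ∩ IntPoints n = S ∧ ∀ x ∈ CubeVerts n, x ∉ S → x ∉ φ.app Q := by
  constructor
  · ext x
    constructor
    · rintro ⟨hxa, hxi⟩
      have hxQ : x ∈ Q := app_subset φ hQconv hxa
      have hxv : x ∈ CubeVerts n := by
        intro i
        obtain ⟨z, hz⟩ := hxi i
        have h0 : (0 : ℝ) ≤ x i := (hQcube hxQ).1 i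
        have h1 : x i ≤ 1 := (hQcube hxQ).2 i
        rw [hz] at h0 h1 ⊢
        have hz0 : (0 : ℤ) ≤ z := by exact_mod_cast h0
        have hz1 : z ≤ 1 := by exact_mod_cast h1
        interval_cases z
        · left; norm_num
        · right; norm_num
      rw [hS]
      exact ⟨hxv, eval_of_mem_app φ hQconv hQcube hxv hxa⟩
    · intro hxS
      have hxQ : x ∈ Q := hSQ hxS
      rw [hS] at hxS
      refine ⟨mem_app_of_eval φ hxQ hxS.2, fun i => ?_⟩
      rcases hxS.1 i with h | h
      · exact ⟨0, by rw [h]; norm_num⟩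
      · exact ⟨1, by rw [h]; norm_num⟩
  · intro x hxv hxS hxa
    exact hxS (by rw [hS]; exact ⟨hxv, eval_of_mem_app φ hQconv hQcube hxv hxa⟩)
end

section
/- Let φ be a reduced Boolean formula defining a nonempty set S ⊆ {0,1}^n, let Q ⊆ [0,1]^n be a convex set containing S, and let ν ∈ ℤ≥1 be such that every inequality in standard form that is valid for S has notch at most ν. Then φ^ν(Q) = conv(S), where φ^1(Q) := φ(Q) and φ^{ℓ+1}(Q) := φ(φ^ℓ(Q)). -/
namespace Fml

/-- Iterated application: `φ^0(Q) = Q` and `φ^{ℓ+1}(Q) = φ(φ^ℓ(Q))`. -/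
def iterApp {n : ℕ} (φ : Fml n) : ℕ → Set (Fin n → ℝ) → Set (Fin n → ℝ)
  | 0, Q => Q
  | k + 1, Q => φ.app (φ.iterApp k Q)

end Fml

/-- The inequality in standard form determined by `I⁺ = Ip`, `I⁻ = Ipᶜ`, `c`, `δ`
is valid for `T`. -/
def StdValid {n : ℕ} (Ip : Finset (Fin n)) (c : Fin n → ℝ) (δ : ℝ)
    (T : Set (Fin n → ℝ)) : Prop :=
  ∀ x ∈ T, δ ≤ ∑ i ∈ Ip, c i * x i + ∑ i ∈ Ipᶜ, c i * (1 - x i)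

/-- The inequality in standard form with coefficients `c` and right-hand side `δ`
has notch at most `ν`. -/
def NotchLE {n : ℕ} (c : Fin n → ℝ) (δ : ℝ) (ν : ℕ) : Prop :=
  ∀ J : Finset (Fin n), ν ≤ J.card → δ ≤ ∑ j ∈ J, c j

/-!
A standard-form inequality reads `δ ≤ ∑ i, c i * |x i - v i|` for the vertex `v` with
`I⁻ = {i | v i = 1}`: a weighted ℓ¹-distance to `v`, which is affine on the cube. By separation
from the finite set `S`, it suffices that every point of `φ^ν(Q)` satisfies each such inequality
valid for `S`. By induction on `k`, the inequality holds on `φ^k(Q) ∩ F` for every face `F` of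
the cube through `v` on which it is valid for `S` and has notch at most `k` on the free
coordinates of `F`. In the inductive step we walk down the formula. A literal violated by `v`
fixes a free coordinate `i` to `1 - v i`: this moves to a smaller face, through the flipped
vertex, at the cost of `c i` in `δ` and of one in the notch. A disjunction is harmless because
faces are extreme in the cube, so `conv (A ∪ B) ∩ F = conv ((A ∪ B) ∩ F)`. If no subformula
gives the inequality, `v` itself satisfies `φ`, so `v ∈ S ∩ F` and validity forces `δ ≤ 0`,
a trivial case.
-/

open Function Set

namespace Fml

variable {n : ℕ}

theorem app_subset_of_subset (φ : Fml n) {T C : Set (Fin n → ℝ)} (hC : Convex ℝ C)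
    (hT : T ⊆ C) : φ.app T ⊆ C := by
  induction φ with
  | pos i | neg i => exact (sep_subset _ _).trans hT
  | and φ ψ ihφ _ => exact inter_subset_left.trans ihφ
  | or φ ψ ihφ ihψ => exact convexHull_min (union_subset ihφ ihψ) hC

theorem iterApp_subset_of_subset (φ : Fml n) {T C : Set (Fin n → ℝ)} (hC : Convex ℝ C)
    (hT : T ⊆ C) : ∀ k, φ.iterApp k T ⊆ C
  | 0 => hT
  | k + 1 => φ.app_subset_of_subset hC (φ.iterApp_subset_of_subset hC hT k)

theorem convex_app (φ : Fml n) {Q : Set (Fin n → ℝ)} (hQ : Convex ℝ Q) :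
    Convex ℝ (φ.app Q) := by
  induction φ with
  | pos i | neg i => exact hQ.inter (convex_hyperplane (LinearMap.proj i).isLinear _)
  | and φ ψ ihφ ihψ => exact ihφ.inter ihψ
  | or φ ψ _ _ => exact convex_convexHull ℝ _

theorem convex_iterApp (φ : Fml n) {Q : Set (Fin n → ℝ)} (hQ : Convex ℝ Q) :
    ∀ k, Convex ℝ (φ.iterApp k Q)
  | 0 => hQ
  | k + 1 => φ.convex_app (φ.convex_iterApp hQ k)

theorem mem_app_of_eval (φ : Fml n) {Q : Set (Fin n → ℝ)} {x : Fin n → ℝ} (hx : x ∈ Q)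
    (he : φ.eval x) : x ∈ φ.app Q := by
  induction φ with
  | pos i | neg i => exact ⟨hx, he⟩
  | and φ ψ ihφ ihψ => exact ⟨ihφ he.1, ihψ he.2⟩
  | or φ ψ ihφ ihψ =>
    exact subset_convexHull ℝ _ (he.imp ihφ ihψ)

theorem mem_iterApp_of_eval (φ : Fml n) {Q : Set (Fin n → ℝ)} {x : Fin n → ℝ} (hx : x ∈ Q)
    (he : φ.eval x) : ∀ k, x ∈ φ.iterApp k Q
  | 0 => hx
  | k + 1 => φ.mem_app_of_eval (φ.mem_iterApp_of_eval hx he k) he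

end Fml

section WeightedL1Dist

variable {ι : Type*} [Fintype ι]

def weightedL1Dist (c v x : ι → ℝ) : ℝ := ∑ i, c i * |x i - v i|

variable {c v x : ι → ℝ}

theorem weightedL1Dist_nonneg (hc : 0 ≤ c) : 0 ≤ weightedL1Dist c v x :=
  Finset.sum_nonneg fun i _ => mul_nonneg (hc i) (abs_nonneg _)

@[simp]
theorem weightedL1Dist_self : weightedL1Dist c v v = 0 := by
  simp [weightedL1Dist]

theorem weightedL1Dist_flip [DecidableEq ι] {i : ι} (hv : v i = 0 ∨ v i = 1)
    (hx : x i = 1 - v i) :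
    weightedL1Dist c v x = weightedL1Dist c (update v i (1 - v i)) x + c i := by
  have hterm : ∀ j, c j * |x j - v j| =
      c j * |x j - update v i (1 - v i) j| + if j = i then c i else 0 := by
    intro j
    by_cases hj : j = i
    · subst hj
      rcases hv with h | h <;> simp [hx, h]
    · simp [hj]
  simp only [weightedL1Dist, hterm, Finset.sum_add_distrib, Finset.sum_ite_eq',
    Finset.mem_univ, if_true]

theorem concaveOn_weightedL1Dist (hv : ∀ i, v i = 0 ∨ v i = 1) :
    ConcaveOn ℝ (Icc 0 1) (weightedL1Dist c v) := by
  refine ⟨convex_Icc 0 1, fun y hy z hz a b ha hb hab => le_of_eq ?_⟩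
  simp only [weightedL1Dist, smul_eq_mul, Finset.mul_sum, ← Finset.sum_add_distrib]
  refine Finset.sum_congr rfl fun i _ => ?_
  have hy0 := hy.1 i; have hy1 := hy.2 i; have hz0 := hz.1 i; have hz1 := hz.2 i
  simp only [Pi.zero_apply, Pi.one_apply] at hy0 hy1 hz0 hz1
  simp only [Pi.add_apply, Pi.smul_apply, smul_eq_mul]
  rcases hv i with h | h <;> rw [h]
  · rw [abs_of_nonneg (by linarith), abs_of_nonneg (by linarith),
      abs_of_nonneg (by nlinarith)]
    ring
  · rw [abs_of_nonpos (by linarith), abs_of_nonpos (by linarith),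
      abs_of_nonpos (by nlinarith)]
    linear_combination (c i) * hab

theorem exists_weightedL1Dist_eq_apply_sub (f : (ι → ℝ) →ₗ[ℝ] ℝ) :
    ∃ c v : ι → ℝ, 0 ≤ c ∧ (∀ i, v i = 0 ∨ v i = 1) ∧
      ∀ x ∈ Icc (0 : ι → ℝ) 1, weightedL1Dist c v x = f (v - x) := by
  classical
  set a : ι → ℝ := fun i => f fun j => if i = j then 1 else 0
  refine ⟨fun i => |a i|, fun i => if 0 < a i then 1 else 0, fun i => abs_nonneg _,
    fun i => by by_cases h : 0 < a i <;> simp [h], fun x hx => ?_⟩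
  rw [LinearMap.pi_apply_eq_sum_univ f, weightedL1Dist]
  refine Finset.sum_congr rfl fun i _ => ?_
  have hx0 : 0 ≤ x i := hx.1 i
  have hx1 : x i ≤ 1 := hx.2 i
  by_cases h : 0 < a i
  · simp only [h, if_true, Pi.sub_apply, smul_eq_mul, abs_of_pos h,
      abs_of_nonpos (sub_nonpos.2 hx1)]
    ring
  · simp only [h, if_false, Pi.sub_apply, smul_eq_mul, abs_of_nonpos (not_lt.1 h), sub_zero,
      abs_of_nonneg hx0]
    ring

theorem exists_weightedL1Dist_separating {S : Set (ι → ℝ)} (hS : S.Finite)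
    (hScube : S ⊆ Icc 0 1) (hx : x ∈ Icc (0 : ι → ℝ) 1) (hxS : x ∉ convexHull ℝ S) :
    ∃ c v : ι → ℝ, ∃ δ : ℝ, 0 ≤ c ∧ (∀ i, v i = 0 ∨ v i = 1) ∧
      (∀ s ∈ S, δ ≤ weightedL1Dist c v s) ∧ weightedL1Dist c v x < δ := by
  obtain ⟨f, u, hfS, hfx⟩ := geometric_hahn_banach_closed_point (convex_convexHull ℝ S)
    (hS.isClosed_convexHull ℝ) hxS
  obtain ⟨c, v, hc, hv, hcv⟩ := exists_weightedL1Dist_eq_apply_sub f.toLinearMap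
  refine ⟨c, v, f v - u, hc, hv, fun s hs => ?_, ?_⟩
  · have := hfS s (subset_convexHull ℝ S hs)
    rw [hcv s (hScube hs), ContinuousLinearMap.coe_coe, map_sub]
    linarith
  · rw [hcv x hx, ContinuousLinearMap.coe_coe, map_sub]
    linarith

end WeightedL1Dist

section CubeFace

variable {ι : Type*}

theorem IsExtreme.convexHull_inter_subset {E : Type*} [AddCommGroup E] [Module ℝ E]
    {A B C : Set E} (hC : Convex ℝ C) (hB : IsExtreme ℝ C B) (hA : A ⊆ C) :
    convexHull ℝ A ∩ B ⊆ convexHull ℝ (A ∩ B) := by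
  let M := {x ∈ convexHull ℝ A | x ∈ B → x ∈ convexHull ℝ (A ∩ B)}
  have hAM : A ⊆ M := fun x hx => ⟨subset_convexHull ℝ A hx,
    fun hxB => subset_convexHull ℝ _ ⟨hx, hxB⟩⟩
  have hM : Convex ℝ M := by
    refine convex_iff_openSegment_subset.2 fun x hx y hy z hz => ⟨?_, fun hzB => ?_⟩
    · exact (convex_convexHull ℝ A).openSegment_subset hx.1 hy.1 hz
    · have hAC := convexHull_min hA hC
      have hxB := hB.left_mem_of_mem_openSegment (hAC hx.1) (hAC hy.1) hzB hz
      have hyB := hB.right_mem_of_mem_openSegment (hAC hx.1) (hAC hy.1) hzB hz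
      exact (convex_convexHull ℝ _).openSegment_subset (hx.2 hxB) (hy.2 hyB) hz
  exact fun x hx => (convexHull_min hAM hM hx.1).2 hx.2

def cubeFace (D : Finset ι) (v : ι → ℝ) : Set (ι → ℝ) :=
  {x ∈ Icc 0 1 | ∀ i ∈ D, x i = v i}

theorem isExtreme_cubeFace {D : Finset ι} {v : ι → ℝ} (hv : ∀ i, v i = 0 ∨ v i = 1) :
    IsExtreme ℝ (Icc 0 1) (cubeFace D v) := by
  refine ⟨sep_subset _ _,
    fun x hx y hy z hz ⟨a, b, ha, hb, hab, hxyz⟩ => ⟨hx, fun i hi => ?_⟩⟩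
  have hzi := congrFun hxyz i
  rw [hz.2 i hi] at hzi
  simp only [Pi.add_apply, Pi.smul_apply, smul_eq_mul] at hzi
  have hx0 : 0 ≤ x i := hx.1 i; have hx1 : x i ≤ 1 := hx.2 i
  have hy0 : 0 ≤ y i := hy.1 i; have hy1 : y i ≤ 1 := hy.2 i
  rcases hv i with h | h <;> rw [h] at hzi ⊢ <;> nlinarith

theorem cubeFace_insert_update [DecidableEq ι] {D : Finset ι} {v : ι → ℝ} {i : ι}
    (hi : i ∉ D) (b : ℝ) : cubeFace (insert i D) (update v i b) = cubeFace D v ∩ {x | x i = b} := by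
  have hupd : ∀ j ∈ D, update v i b j = v j := fun j hj =>
    update_of_ne (ne_of_mem_of_not_mem hj hi) _ _
  ext x
  simp only [cubeFace, Finset.forall_mem_insert, update_self, mem_inter_iff, mem_ofPred_eq]
  constructor
  · rintro ⟨hx, hxi, hxD⟩
    exact ⟨⟨hx, fun j hj => (hxD j hj).trans (hupd j hj)⟩, hxi⟩
  · rintro ⟨⟨hx, hxD⟩, hxi⟩
    exact ⟨hx, hxi, fun j hj => (hxD j hj).trans (hupd j hj).symm⟩

end CubeFace

def NotchLEOutside {ι : Type*} (c : ι → ℝ) (δ : ℝ) (k : ℕ) (D : Finset ι) : Prop :=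
  ∀ J : Finset ι, Disjoint J D → k ≤ J.card → δ ≤ ∑ j ∈ J, c j

namespace NotchLEOutside

variable {ι : Type*} {c : ι → ℝ} {δ : ℝ} {k : ℕ} {D : Finset ι}

theorem nonpos (h : NotchLEOutside c δ 0 D) : δ ≤ 0 := by
  simpa using h ∅ (Finset.disjoint_empty_left D) le_rfl

theorem of_succ [DecidableEq ι] (h : NotchLEOutside c δ (k + 1) D) {i : ι} (hi : i ∉ D) :
    NotchLEOutside c (δ - c i) k (insert i D) := by
  intro J hJ hk
  have hiJ : i ∉ J := fun h => Finset.disjoint_left.1 hJ h (Finset.mem_insert_self i D)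
  have := h (insert i J)
    (Finset.disjoint_insert_left.2 ⟨hi, hJ.mono_right (Finset.subset_insert i D)⟩)
    (by rw [Finset.card_insert_of_notMem hiJ]; omega)
  rw [Finset.sum_insert hiJ] at this
  linarith

end NotchLEOutside

theorem cubeVerts_subset_Icc (n : ℕ) : CubeVerts n ⊆ Icc 0 1 := fun x hx =>
  ⟨fun i => by rcases hx i with h | h <;> simp [h],
    fun i => by rcases hx i with h | h <;> simp [h]⟩

theorem update_one_sub_mem_cubeVerts {n : ℕ} {v : Fin n → ℝ} (hv : v ∈ CubeVerts n)
    (i : Fin n) : update v i (1 - v i) ∈ CubeVerts n := fun j => by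
  by_cases hj : j = i
  · subst hj
    rcases hv j with h | h <;> simp [h]
  · simpa [hj] using hv j

theorem cubeVerts_finite (n : ℕ) : (CubeVerts n).Finite :=
  (Set.Finite.pi' fun _ => (Set.finite_singleton (1 : ℝ)).insert 0).subset fun _ hx => hx

theorem stdValid_of_le_weightedL1Dist {n : ℕ} {T : Set (Fin n → ℝ)} {c v : Fin n → ℝ}
    {δ : ℝ} (hv : v ∈ CubeVerts n) (hT : T ⊆ Icc 0 1) (h : ∀ x ∈ T, δ ≤ weightedL1Dist c v x) :
    StdValid {i | v i = 0} c δ T := by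
  intro x hx
  convert h x hx using 1
  have hx0 : ∀ i, 0 ≤ x i := (hT hx).1
  have hx1 : ∀ i, x i ≤ 1 := (hT hx).2
  rw [weightedL1Dist, Finset.compl_filter,
    ← Finset.sum_filter_add_sum_filter_not Finset.univ (fun i => v i = 0)]
  congr 1 <;> refine Finset.sum_congr rfl fun i hi => ?_
  · rw [(Finset.mem_filter.1 hi).2, sub_zero, abs_of_nonneg (hx0 i)]
  · rw [(hv i).resolve_left (Finset.mem_filter.1 hi).2, abs_of_nonpos (sub_nonpos.2 (hx1 i)),
      neg_sub]

namespace Fml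

variable {n : ℕ} {T Q : Set (Fin n → ℝ)} {c v : Fin n → ℝ} {D : Finset (Fin n)} {δ : ℝ}

theorem le_weightedL1Dist_on_literal (hv : v ∈ CubeVerts n)
    (hflip : ∀ i ∉ D, ∀ y ∈ T ∩ cubeFace D v, y i = 1 - v i → δ ≤ weightedL1Dist c v y)
    {i : Fin n} {β : ℝ} (hβ : β = 0 ∨ β = 1) (hne : v i ≠ β) :
    ∀ y ∈ {x ∈ T | x i = β} ∩ cubeFace D v, δ ≤ weightedL1Dist c v y := by
  rintro y ⟨⟨hyT, hyi⟩, hyF⟩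
  have hi : i ∉ D := fun hi => hne ((hyF.2 i hi).symm.trans hyi)
  have hvi := hv i
  exact hflip i hi y ⟨hyT, hyF⟩ (by grind)

theorem le_weightedL1Dist_on_app_or_eval (hT : T ⊆ Icc 0 1) (hv : v ∈ CubeVerts n)
    (hflip : ∀ i ∉ D, ∀ y ∈ T ∩ cubeFace D v, y i = 1 - v i → δ ≤ weightedL1Dist c v y)
    (ψ : Fml n) : (∀ y ∈ ψ.app T ∩ cubeFace D v, δ ≤ weightedL1Dist c v y) ∨ ψ.eval v := by
  induction ψ with
  | pos i =>
    by_cases h : v i = 1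
    · exact Or.inr h
    · exact Or.inl (le_weightedL1Dist_on_literal hv hflip (Or.inr rfl) h)
  | neg i =>
    by_cases h : v i = 0
    · exact Or.inr h
    · exact Or.inl (le_weightedL1Dist_on_literal hv hflip (Or.inl rfl) h)
  | and ψ₁ ψ₂ ih₁ ih₂ =>
    rcases ih₁ with h₁ | h₁
    · exact Or.inl fun y hy => h₁ y ⟨hy.1.1, hy.2⟩
    rcases ih₂ with h₂ | h₂
    · exact Or.inl fun y hy => h₂ y ⟨hy.1.2, hy.2⟩
    exact Or.inr ⟨h₁, h₂⟩
  | or ψ₁ ψ₂ ih₁ ih₂ =>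
    rcases ih₁.symm with h₁ | h₁
    · exact Or.inr (Or.inl h₁)
    rcases ih₂.symm with h₂ | h₂
    · exact Or.inr (Or.inr h₂)
    have hsub : ψ₁.app T ∪ ψ₂.app T ⊆ Icc 0 1 := union_subset
      (ψ₁.app_subset_of_subset (convex_Icc 0 1) hT) (ψ₂.app_subset_of_subset (convex_Icc 0 1) hT)
    refine Or.inl fun y hy => ?_
    have hy' := (isExtreme_cubeFace hv).convexHull_inter_subset (convex_Icc 0 1) hsub hy
    refine (convexHull_min ?_ ((concaveOn_weightedL1Dist hv).convex_ge δ) hy').2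
    rintro z ⟨hz | hz, hzF⟩
    · exact ⟨hzF.1, h₁ z ⟨hz, hzF⟩⟩
    · exact ⟨hzF.1, h₂ z ⟨hz, hzF⟩⟩

theorem le_weightedL1Dist_on_iterApp (hQ : Q ⊆ Icc 0 1) (φ : Fml n) (hc : 0 ≤ c) (k : ℕ)
    (hv : v ∈ CubeVerts n)
    (hvalid : ∀ s ∈ {x ∈ CubeVerts n | φ.eval x} ∩ cubeFace D v, δ ≤ weightedL1Dist c v s)
    (hnotch : NotchLEOutside c δ k D) :
    ∀ x ∈ φ.iterApp k Q ∩ cubeFace D v, δ ≤ weightedL1Dist c v x := by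
  induction k generalizing D v δ with
  | zero => exact fun x _ => hnotch.nonpos.trans (weightedL1Dist_nonneg hc)
  | succ k ih =>
    classical
    by_cases hδ : δ ≤ 0
    · exact fun x _ => hδ.trans (weightedL1Dist_nonneg hc)
    have hT := φ.iterApp_subset_of_subset (convex_Icc 0 1) hQ k
    refine (φ.le_weightedL1Dist_on_app_or_eval hT hv (fun i hi y hy hyi => ?_)).resolve_right
      fun hφv => hδ ?_
    · have hface := cubeFace_insert_update (v := v) hi (1 - v i)
      have hvalid' : ∀ s ∈ {x ∈ CubeVerts n | φ.eval x} ∩ cubeFace (insert i D)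
          (update v i (1 - v i)), δ - c i ≤ weightedL1Dist c (update v i (1 - v i)) s := by
        rintro s ⟨hs, hsF⟩
        rw [hface] at hsF
        have := hvalid s ⟨hs, hsF.1⟩
        rw [weightedL1Dist_flip (hv i) hsF.2] at this
        linarith
      have := ih (update_one_sub_mem_cubeVerts hv i) hvalid' (hnotch.of_succ hi) y
        (by rw [hface]; exact ⟨hy.1, hy.2, hyi⟩)
      rw [weightedL1Dist_flip (hv i) hyi]
      linarith
    · simpa using hvalid v ⟨⟨hv, hφv⟩, cubeVerts_subset_Icc n hv, fun _ _ => rfl⟩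

end Fml

theorem stmt8_general {n : ℕ} (φ : Fml n) (S Q : Set (Fin n → ℝ))
    (hS : S = {x ∈ CubeVerts n | φ.eval x})
    (hQconv : Convex ℝ Q) (hQcube : Q ⊆ Set.Icc (0 : Fin n → ℝ) 1) (hSQ : S ⊆ Q)
    (ν : ℕ)
    (hnotch : ∀ (Ip : Finset (Fin n)) (c : Fin n → ℝ) (δ : ℝ),
      (∀ i, 0 ≤ c i) → 0 ≤ δ → StdValid Ip c δ S → NotchLE c δ ν) :
    φ.iterApp ν Q = convexHull ℝ S := by
  have hSverts : S ⊆ CubeVerts n := hS ▸ sep_subset _ _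
  have hScube := hSverts.trans (cubeVerts_subset_Icc n)
  refine Subset.antisymm (fun x hx => ?_) (convexHull_min
    (fun s hs => φ.mem_iterApp_of_eval (hSQ hs) (hS ▸ hs).2 ν) (φ.convex_iterApp hQconv ν))
  have hxcube := φ.iterApp_subset_of_subset (convex_Icc 0 1) hQcube ν hx
  by_contra hxS
  obtain ⟨c, v, δ, hc, hv, hSδ, hxδ⟩ := exists_weightedL1Dist_separating
    ((cubeVerts_finite n).subset hSverts) hScube hxcube hxS
  have hδ : 0 ≤ δ := (weightedL1Dist_nonneg hc).trans hxδ.le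
  have hνnotch := hnotch _ c δ hc hδ (stdValid_of_le_weightedL1Dist hv hScube hSδ)
  have := φ.le_weightedL1Dist_on_iterApp hQcube hc ν hv (D := ∅)
    (fun s hs => hSδ s (hS ▸ hs.1)) (fun J _ hJ => hνnotch J hJ) x ⟨hx, hxcube, by simp⟩
  linarith

theorem stmt8 {n : ℕ} (φ : Fml n) (S Q : Set (Fin n → ℝ))
    (hS : S = {x ∈ CubeVerts n | φ.eval x}) (hSne : S.Nonempty)
    (hQconv : Convex ℝ Q) (hQcube : Q ⊆ Set.Icc (0 : Fin n → ℝ) 1) (hSQ : S ⊆ Q)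
    (ν : ℕ) (hν : 1 ≤ ν)
    (hnotch : ∀ (Ip : Finset (Fin n)) (c : Fin n → ℝ) (δ : ℝ),
      (∀ i, 0 ≤ c i) → 0 ≤ δ → StdValid Ip c δ S → NotchLE c δ ν) :
    φ.iterApp ν Q = convexHull ℝ S :=
  stmt8_general φ S Q hS hQconv hQcube hSQ ν hnotch
end
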